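/- Suppose G₁, ..., G_h are graphs whose pairwise intersections all equal a single common vertex v, and G is their union. Then T(G) = (Σᵢ T(Gᵢ)) - h + 1. -/

import Mathlib

open SimpleGraph

/-- A tree cover of `G`: vertex-disjoint induced subtrees covering all vertices. -/
def IsTreeCover {V : Type} (G : SimpleGraph V) (C : Finset (Set V)) : Prop :=
  (∀ s ∈ C, (G.induce s).IsTree) ∧ (∀ v : V, ∃ s ∈ C, v ∈ s) ∧
    (C : Set (Set V)).PairwiseDisjoint id

/-- The tree cover number: minimum cardinality of a tree cover. -/
noncomputable def treeCoverNumber {V : Type} (G : SimpleGraph V) : ℕ :=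
  sInf {n | ∃ C : Finset (Set V), IsTreeCover G C ∧ C.card = n}

/-!
Each part `s i` is attached to the rest of `G` only at `v`, so a path between two vertices of
`s i` stays inside `s i`, and every cycle of `G` lies in a single part. Hence a tree of `G` meets
every part in a tree, and only the tree through `v` meets more than one part: restricting an
optimal tree cover of `G` to the parts gives `∑ T(Gᵢ) ≤ T(G) + h - 1`. Conversely, the trees
through `v` of optimal covers of the parts glue to a single tree of `G`, which together with
their remaining trees is a tree cover of `G` of size `∑ T(Gᵢ) - h + 1`.
-/

open Finset

variable {V : Type} {ι : Type*} {G : SimpleGraph V}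

lemma exists_isTreeCover_card_eq [Fintype V] (G : SimpleGraph V) :
    ∃ C, IsTreeCover G C ∧ C.card = treeCoverNumber G := by
  classical
  have hsingletons : IsTreeCover G (univ.image fun x : V => ({x} : Set V)) := by
    refine ⟨?_, ?_, ?_⟩
    · simp only [mem_image, mem_univ, true_and, forall_exists_index]
      rintro _ x rfl
      exact IsTree.of_subsingleton
    · exact fun x => ⟨{x}, mem_image_of_mem _ (mem_univ x), rfl⟩
    · intro a ha b hb hab
      obtain ⟨x, -, rfl⟩ := mem_image.mp ha
      obtain ⟨y, -, rfl⟩ := mem_image.mp hb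
      exact Set.disjoint_singleton.mpr fun hxy => hab (hxy ▸ rfl)
  exact Nat.sInf_mem (s := {n | ∃ C, IsTreeCover G C ∧ C.card = n}) ⟨_, _, hsingletons, rfl⟩

lemma treeCoverNumber_le {C : Finset (Set V)} (hC : IsTreeCover G C) :
    treeCoverNumber G ≤ C.card :=
  Nat.sInf_le ⟨C, hC, rfl⟩

lemma one_le_treeCoverNumber [Fintype V] [Nonempty V] (G : SimpleGraph V) :
    1 ≤ treeCoverNumber G := by
  obtain ⟨C, hC, hcard⟩ := exists_isTreeCover_card_eq G
  obtain ⟨t, ht, -⟩ := hC.2.1 (Classical.arbitrary V)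
  exact hcard ▸ card_pos.mpr ⟨t, ht⟩

namespace SimpleGraph

noncomputable def induceInduceIso (s : Set V) (c : Set s) :
    (G.induce s).induce c ≃g G.induce (Subtype.val '' c) where
  toEquiv := Equiv.Set.image Subtype.val c Subtype.val_injective
  map_rel_iff' := Iff.rfl

lemma Walk.mem_of_mem_support_map_induce {t : Set V} {a b : t} (p : (G.induce t).Walk a b) :
    ∀ x ∈ (p.map (Embedding.induce t).toHom).support, x ∈ t := by
  intro x hx
  rw [Walk.support_map, List.mem_map] at hx
  obtain ⟨y, -, rfl⟩ := hx
  exact y.2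

lemma Walk.IsCycle.induce {u : V} {t : Set V} {c : G.Walk u u} (hc : c.IsCycle)
    (ht : ∀ x ∈ c.support, x ∈ t) : (c.induce t ht).IsCycle := by
  rw [← Walk.isCycle_map_iff_of_injective (f := (Embedding.induce t).toHom)
    Subtype.val_injective, Walk.map_induce]
  exact hc

def IsAttachedAt (G : SimpleGraph V) (S : Set V) (v : V) : Prop :=
  ∀ ⦃a b⦄, G.Adj a b → a ∈ S → b ∉ S → a = v

namespace IsAttachedAt

variable {S : Set V} {v : V}

lemma support_subset_of_notMem_support (hS : G.IsAttachedAt S v) {a b : V} (p : G.Walk a b)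
    (ha : a ∈ S) (hv : v ∉ p.support) : ∀ x ∈ p.support, x ∈ S := by
  induction p with
  | nil => simpa using ha
  | @cons a c b hadj p ih =>
    simp only [Walk.support_cons, List.mem_cons, not_or, forall_eq_or_imp] at hv ⊢
    have hc : c ∈ S := by
      by_contra hc
      exact hv.1 (hS hadj ha hc).symm
    exact ⟨ha, ih hc hv.2⟩

lemma mem_support_of_notMem_of_mem (hS : G.IsAttachedAt S v) {a b : V} (p : G.Walk a b)
    (ha : a ∉ S) (hb : b ∈ S) : v ∈ p.support := by
  by_contra hv
  exact ha (hS.support_subset_of_notMem_support p.reverse hb (by simpa using hv) a (by simp))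

lemma support_subset_of_isPath (hS : G.IsAttachedAt S v) {a b : V} (p : G.Walk a b)
    (hp : p.IsPath) (ha : a ∈ S) (hb : b ∈ S) : ∀ x ∈ p.support, x ∈ S := by
  induction p with
  | nil => simpa using ha
  | @cons a c b hadj p ih =>
    rw [Walk.cons_isPath_iff] at hp
    simp only [Walk.support_cons, List.mem_cons, forall_eq_or_imp]
    by_cases hc : c ∈ S
    · exact ⟨ha, ih hp.1 hc hb⟩
    · -- leaving `S` at `a = v`, the path would have to re-enter `S` through `v`
      refine absurd ?_ hp.2
      exact hS hadj ha hc ▸ hS.mem_support_of_notMem_of_mem p hc hb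

lemma subset_of_preconnected (hS : G.IsAttachedAt S v) {t : Set V}
    (ht : (G.induce t).Preconnected) (hvt : v ∉ t) {a : V} (hat : a ∈ t) (haS : a ∈ S) :
    t ⊆ S := by
  intro b hbt
  obtain ⟨p⟩ := ht ⟨a, hat⟩ ⟨b, hbt⟩
  have hpt := Walk.mem_of_mem_support_map_induce p
  exact hS.support_subset_of_notMem_support _ haS (fun hv => hvt (hpt v hv)) b
    (Walk.end_mem_support _)

lemma isTree_induce_inter (hS : G.IsAttachedAt S v) {t : Set V} (ht : (G.induce t).IsTree)
    (hne : (S ∩ t).Nonempty) : (G.induce (S ∩ t)).IsTree where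
  isAcyclic := ht.isAcyclic.embedding (G.induceHomOfLE Set.inter_subset_right)
  connected := by
    classical
    have := hne.to_subtype
    refine Connected.mk fun ⟨a, haS, hat⟩ ⟨b, hbS, hbt⟩ => ?_
    obtain ⟨p⟩ := ht.connected.preconnected ⟨a, hat⟩ ⟨b, hbt⟩
    set q := p.toPath.1.map (Embedding.induce t).toHom
    have hq : q.IsPath := p.toPath.2.map Subtype.val_injective
    exact ⟨q.induce (S ∩ t) fun x hx =>
      ⟨hS.support_subset_of_isPath q hq haS hbS x hx, Walk.mem_of_mem_support_map_induce _ x hx⟩⟩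

lemma treeCoverNumber_induce_le (hS : G.IsAttachedAt S v) {C : Finset (Set V)}
    (hC : IsTreeCover G C) [DecidablePred fun t : Set V => (S ∩ t).Nonempty] :
    treeCoverNumber (G.induce S) ≤ #{t ∈ C | (S ∩ t).Nonempty} := by
  classical
  obtain ⟨hCtree, hCcov, hCdisj⟩ := hC
  refine (treeCoverNumber_le (C := {t ∈ C | (S ∩ t).Nonempty}.image (Subtype.val ⁻¹' ·))
    ⟨?_, ?_, ?_⟩).trans card_image_le
  · simp only [mem_image, mem_filter, forall_exists_index, and_imp]
    rintro _ t htC hne rfl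
    rw [(induceInduceIso S _).isTree_iff, Subtype.image_preimage_coe]
    exact hS.isTree_induce_inter (hCtree t htC) hne
  · intro x
    obtain ⟨t, htC, hxt⟩ := hCcov x
    exact ⟨_, mem_image_of_mem _ (mem_filter.mpr ⟨htC, x, x.2, hxt⟩), hxt⟩
  · intro a ha b hb hab
    obtain ⟨t₁, ht₁, rfl⟩ := mem_image.mp ha
    obtain ⟨t₂, ht₂, rfl⟩ := mem_image.mp hb
    exact (hCdisj (mem_filter.mp ht₁).1 (mem_filter.mp ht₂).1
      fun h => hab (h ▸ rfl)).preimage _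

end IsAttachedAt

structure IsVertexSum (G : SimpleGraph V) (s : ι → Set V) (v : V) : Prop where
  inter_eq : ∀ i j, i ≠ j → s i ∩ s j = {v}
  exists_mem_of_adj : ∀ a b, G.Adj a b → ∃ i, a ∈ s i ∧ b ∈ s i

namespace IsVertexSum

variable {s : ι → Set V} {v : V}

lemma mem_of_iUnion_eq_univ (hG : G.IsVertexSum s v) (hcov : ⋃ i, s i = Set.univ) (i : ι) :
    v ∈ s i := by
  obtain ⟨k, hk⟩ := Set.mem_iUnion.mp (hcov ▸ Set.mem_univ v)
  rcases eq_or_ne i k with rfl | hik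
  · exact hk
  · exact ((hG.inter_eq i k hik).ge rfl).1

lemma isAttachedAt (hG : G.IsVertexSum s v) (i : ι) : G.IsAttachedAt (s i) v := by
  intro a b hadj ha hb
  obtain ⟨k, hak, hbk⟩ := hG.exists_mem_of_adj a b hadj
  have hik : i ≠ k := by rintro rfl; exact hb hbk
  exact (hG.inter_eq i k hik).le ⟨ha, hak⟩

lemma exists_support_subset_of_isCycle (hG : G.IsVertexSum s v) {u : V} {c : G.Walk u u}
    (hc : c.IsCycle) : ∃ i, ∀ x ∈ c.support, x ∈ s i := by
  cases c with
  | nil => exact absurd rfl hc.ne_nil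
  | cons hadj p =>
    obtain ⟨i, hu, hd⟩ := hG.exists_mem_of_adj _ _ hadj
    rw [Walk.cons_isCycle_iff] at hc
    refine ⟨i, ?_⟩
    simp only [Walk.support_cons, List.mem_cons, forall_eq_or_imp]
    exact ⟨hu, (hG.isAttachedAt i).support_subset_of_isPath p hc.1 hd hu⟩

lemma subsingleton_setOf_inter_nonempty (hG : G.IsVertexSum s v) {t : Set V}
    (ht : (G.induce t).Preconnected) (hvt : v ∉ t) : {i | (s i ∩ t).Nonempty}.Subsingleton := by
  rintro i ⟨a, hai, hat⟩ j ⟨b, hbj, hbt⟩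
  by_contra hij
  have hti : t ⊆ s i := (hG.isAttachedAt i).subset_of_preconnected ht hvt hat hai
  have hbv : b = v := (hG.inter_eq i j hij).le ⟨hti hbt, hbj⟩
  exact hvt (hbv ▸ hbt)

theorem sum_treeCoverNumber_add_one_le [Fintype V] [Fintype ι] (hG : G.IsVertexSum s v) :
    ∑ i, treeCoverNumber (G.induce (s i)) + 1 ≤ treeCoverNumber G + Fintype.card ι := by
  classical
  obtain ⟨C, hC, hCcard⟩ := exists_isTreeCover_card_eq G
  obtain ⟨tv, htv, hvtv⟩ := hC.2.1 v
  have hmeet : ∀ t ∈ C.erase tv, #{i | (s i ∩ t).Nonempty} ≤ 1 := by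
    intro t ht
    obtain ⟨hne, htC⟩ := mem_erase.mp ht
    have hvt : v ∉ t := fun hvt => Set.disjoint_left.mp (hC.2.2 htC htv hne) hvt hvtv
    exact card_le_one.mpr fun i hi j hj =>
      hG.subsingleton_setOf_inter_nonempty (hC.1 t htC).connected.preconnected hvt
        (mem_filter.mp hi).2 (mem_filter.mp hj).2
  calc ∑ i, treeCoverNumber (G.induce (s i)) + 1
      ≤ ∑ i, #{t ∈ C | (s i ∩ t).Nonempty} + 1 := by
        gcongr with i
        exact (hG.isAttachedAt i).treeCoverNumber_induce_le hC
    _ = ∑ t ∈ C, #{i | (s i ∩ t).Nonempty} + 1 := by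
        simp only [card_filter]
        rw [sum_comm]
    _ = #{i | (s i ∩ tv).Nonempty} + ∑ t ∈ C.erase tv, #{i | (s i ∩ t).Nonempty} + 1 := by
        rw [add_sum_erase C (fun t => #{i | (s i ∩ t).Nonempty}) htv]
    _ ≤ Fintype.card ι + #(C.erase tv) * 1 + 1 := by
        gcongr
        · exact card_filter_le _ _
        · exact sum_le_card_nsmul _ _ _ hmeet
    _ = treeCoverNumber G + Fintype.card ι := by
        rw [card_erase_of_mem htv, hCcard, mul_one]
        have := card_pos.mpr ⟨tv, htv⟩
        omega

lemma isTree_induce_iUnion [Nonempty ι] (hG : G.IsVertexSum s v) {c : ι → Set V}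
    (hcs : ∀ i, c i ⊆ s i) (hvc : ∀ i, v ∈ c i) (hc : ∀ i, (G.induce (c i)).IsTree) :
    (G.induce (⋃ i, c i)).IsTree where
  connected := by
    rw [← Set.sUnion_range]
    refine induce_sUnion_connected_of_pairwise_not_disjoint (Set.range_nonempty c) ?_ ?_
    · rintro _ _ ⟨i, rfl⟩ ⟨j, rfl⟩
      exact ⟨v, hvc i, hvc j⟩
    · rintro _ ⟨i, rfl⟩
      exact (hc i).connected
  isAcyclic := by
    intro u w hw
    set w' := w.map (Embedding.induce (⋃ i, c i)).toHom
    have hw' : w'.IsCycle := hw.map Subtype.val_injective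
    obtain ⟨i, hi⟩ := hG.exists_support_subset_of_isCycle hw'
    -- inside `s i` the union `⋃ j, c j` agrees with `c i`
    have hci : ∀ x ∈ w'.support, x ∈ c i := by
      intro x hx
      obtain ⟨j, hj⟩ := Set.mem_iUnion.mp (Walk.mem_of_mem_support_map_induce w x hx)
      rcases eq_or_ne j i with rfl | hji
      · exact hj
      · exact (hG.inter_eq j i hji).le ⟨hcs j hj, hi x hx⟩ ▸ hvc i
    exact (hc i).isAcyclic _ (hw'.induce hci)

end IsVertexSum

end SimpleGraph

open Classical in
noncomputable def mergeCovers [Fintype ι] {s : ι → Set V} (C : ∀ i, Finset (Set (s i)))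
    (c : ∀ i, Set (s i)) : Finset (Set V) :=
  insert (⋃ i, Subtype.val '' c i)
    (univ.biUnion fun i => ((C i).erase (c i)).image (Subtype.val '' ·))

lemma card_mergeCovers_add_card_le [Fintype ι] {s : ι → Set V} {C : ∀ i, Finset (Set (s i))}
    {c : ∀ i, Set (s i)} (hcC : ∀ i, c i ∈ C i) :
    #(mergeCovers C c) + Fintype.card ι ≤ ∑ i, #(C i) + 1 := by
  classical
  calc #(mergeCovers C c) + Fintype.card ι
      ≤ ∑ i, #((C i).erase (c i)) + 1 + Fintype.card ι := by
        gcongr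
        refine (card_insert_le _ _).trans (Nat.add_le_add_right ?_ 1)
        exact card_biUnion_le.trans (sum_le_sum fun i _ => card_image_le)
    _ = ∑ i, (#((C i).erase (c i)) + 1) + 1 := by
        rw [sum_add_distrib, sum_const, smul_eq_mul, mul_one, card_univ]
        ring
    _ = ∑ i, #(C i) + 1 := by
        simp only [card_erase_add_one (hcC _)]

lemma pairwiseDisjoint_mergeCovers [Fintype ι] {s : ι → Set V} {v : V}
    (hint : ∀ i j, i ≠ j → s i ∩ s j = {v}) {C : ∀ i, Finset (Set (s i))}
    (hC : ∀ i, (C i : Set (Set (s i))).PairwiseDisjoint id) {c : ∀ i, Set (s i)}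
    (hcC : ∀ i, c i ∈ C i) (hvc : ∀ i, v ∈ Subtype.val '' c i) :
    (mergeCovers C c : Set (Set V)).PairwiseDisjoint id := by
  classical
  have hdisj : ∀ i, ∀ c' ∈ (C i).erase (c i),
      Disjoint (Subtype.val '' c i) (Subtype.val '' c') := fun i c' hc' =>
    (Set.disjoint_image_iff Subtype.val_injective).mpr
      (hC i (hcC i) (mem_of_mem_erase hc') (ne_of_mem_erase hc').symm)
  have hpieces : (↑(univ.biUnion fun i => ((C i).erase (c i)).image (Subtype.val '' ·)) :
      Set (Set V)).PairwiseDisjoint id := by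
    intro a ha b hb hab
    obtain ⟨i, -, hai⟩ := mem_biUnion.mp ha
    obtain ⟨c₁, hc₁, rfl⟩ := mem_image.mp hai
    obtain ⟨j, -, hbj⟩ := mem_biUnion.mp hb
    obtain ⟨c₂, hc₂, rfl⟩ := mem_image.mp hbj
    rcases eq_or_ne i j with rfl | hij
    · exact (Set.disjoint_image_iff Subtype.val_injective).mpr
        (hC i (mem_of_mem_erase hc₁) (mem_of_mem_erase hc₂) fun h => hab (h ▸ rfl))
    · refine Set.disjoint_left.mpr fun x hx₁ hx₂ => Set.disjoint_left.mp (hdisj i c₁ hc₁) ?_ hx₁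
      have hxv : x = v := (hint i j hij).le
        ⟨Subtype.coe_image_subset _ _ hx₁, Subtype.coe_image_subset _ _ hx₂⟩
      exact hxv ▸ hvc i
  rw [mergeCovers, coe_insert]
  refine hpieces.insert fun b hb _ => Set.disjoint_left.mpr fun x hxT hxb => ?_
  obtain ⟨i, -, hbi⟩ := mem_biUnion.mp hb
  obtain ⟨c', hc', rfl⟩ := mem_image.mp hbi
  refine Set.disjoint_left.mp (hdisj i c' hc') ?_ hxb
  obtain ⟨j, hj⟩ := Set.mem_iUnion.mp hxT
  rcases eq_or_ne j i with rfl | hji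
  · exact hj
  · exact (hint j i hji).le ⟨Subtype.coe_image_subset _ _ hj, Subtype.coe_image_subset _ _ hxb⟩
      ▸ hvc i

namespace SimpleGraph.IsVertexSum

variable {s : ι → Set V} {v : V}

lemma isTreeCover_mergeCovers [Fintype ι] [Nonempty ι] (hG : G.IsVertexSum s v)
    (hcov : ⋃ i, s i = Set.univ) {C : ∀ i, Finset (Set (s i))}
    (hC : ∀ i, IsTreeCover (G.induce (s i)) (C i)) {c : ∀ i, Set (s i)} (hcC : ∀ i, c i ∈ C i)
    (hvc : ∀ i, v ∈ Subtype.val '' c i) :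
    IsTreeCover G (mergeCovers C c) := by
  classical
  have htree : ∀ i, ∀ c' ∈ C i, (G.induce (Subtype.val '' c')).IsTree := fun i c' hc' =>
    (induceInduceIso _ _).isTree_iff.mp ((hC i).1 c' hc')
  refine ⟨?_, ?_, pairwiseDisjoint_mergeCovers hG.inter_eq (fun i => (hC i).2.2) hcC hvc⟩
  · intro t ht
    rw [mergeCovers, mem_insert, mem_biUnion] at ht
    rcases ht with rfl | ⟨i, -, hti⟩
    · exact hG.isTree_induce_iUnion (fun i => Subtype.coe_image_subset _ _) hvc
        fun i => htree i _ (hcC i)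
    · obtain ⟨c', hc', rfl⟩ := mem_image.mp hti
      exact htree i c' (mem_of_mem_erase hc')
  · intro x
    obtain ⟨i, hxi⟩ := Set.mem_iUnion.mp (hcov ▸ Set.mem_univ x)
    obtain ⟨c', hc', hxc'⟩ := (hC i).2.1 ⟨x, hxi⟩
    by_cases h : c' = c i
    · exact ⟨_, mem_insert_self _ _, Set.mem_iUnion.mpr ⟨i, _, h ▸ hxc', rfl⟩⟩
    · have hc'D : c' ∈ (C i).erase (c i) := mem_erase.mpr ⟨h, hc'⟩
      exact ⟨Subtype.val '' c', mem_insert_of_mem (mem_biUnion.mpr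
        ⟨i, mem_univ _, mem_image_of_mem _ hc'D⟩), _, hxc', rfl⟩

theorem treeCoverNumber_add_card_le [Fintype V] [Fintype ι] (hG : G.IsVertexSum s v)
    (hcov : ⋃ i, s i = Set.univ) :
    treeCoverNumber G + Fintype.card ι ≤ ∑ i, treeCoverNumber (G.induce (s i)) + 1 := by
  classical
  obtain ⟨i, -⟩ := Set.mem_iUnion.mp (hcov ▸ Set.mem_univ v)
  have : Nonempty ι := ⟨i⟩
  choose C hC hCcard using fun i => exists_isTreeCover_card_eq (G.induce (s i))
  choose c hcC hvc using fun i => (hC i).2.1 ⟨v, hG.mem_of_iUnion_eq_univ hcov i⟩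
  calc treeCoverNumber G + Fintype.card ι
      ≤ #(mergeCovers C c) + Fintype.card ι := by
        gcongr
        exact treeCoverNumber_le (hG.isTreeCover_mergeCovers hcov hC hcC fun i => ⟨_, hvc i, rfl⟩)
    _ ≤ ∑ i, #(C i) + 1 := card_mergeCovers_add_card_le hcC
    _ = ∑ i, treeCoverNumber (G.induce (s i)) + 1 := by simp only [hCcard]

end SimpleGraph.IsVertexSum

theorem stmt_12_general {V : Type} [Fintype V] (G : SimpleGraph V) (h : ℕ)
    (s : Fin h → Set V) (v : V)
    (hint : ∀ i j, i ≠ j → s i ∩ s j = {v})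
    (hcov : (⋃ i, s i) = Set.univ)
    (hedge : ∀ a b : V, G.Adj a b → ∃ i, a ∈ s i ∧ b ∈ s i) :
    treeCoverNumber G = (∑ i, treeCoverNumber (G.induce (s i))) - h + 1 := by
  have hG : G.IsVertexSum s v := ⟨hint, hedge⟩
  have hle := hG.sum_treeCoverNumber_add_one_le
  have hge := hG.treeCoverNumber_add_card_le hcov
  have hpos : 1 ≤ treeCoverNumber G := have : Nonempty V := ⟨v⟩; one_le_treeCoverNumber G
  rw [Fintype.card_fin] at hle hge
  omega

theorem stmt_12 {V : Type} [Fintype V] (G : SimpleGraph V) (h : ℕ) (hh : 0 < h)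
    (s : Fin h → Set V) (v : V)
    (hint : ∀ i j, i ≠ j → s i ∩ s j = {v})
    (hcov : (⋃ i, s i) = Set.univ)
    (hedge : ∀ a b : V, G.Adj a b → ∃ i, a ∈ s i ∧ b ∈ s i) :
    treeCoverNumber G = (∑ i, treeCoverNumber (G.induce (s i))) - h + 1 :=
  stmt_12_general G h s v hint hcov hedge
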